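/- For every normalized fully binary string s of length n: if the last symbol of s is 1, then the flip sorting distance satisfies d_s(s) = n − 2, and if the last symbol of s is 0, then d_s(s) = n − 1. -/

import Mathlib

/-- Prefix reversal (flip) of the first `i` symbols of `s`. -/
def pflip (i : ℕ) (s : List ℕ) : List ℕ := (s.take i).reverse ++ s.drop i

/-- One flip step: `t` is obtained from `s` by some flip `f^(i)` with `1 ≤ i ≤ |s|`. -/
def FlipStep (s t : List ℕ) : Prop := ∃ i, 1 ≤ i ∧ i ≤ s.length ∧ t = pflip i s

/-- `ReachIn m s t`: `t` can be obtained from `s` by exactly `m` flips. -/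
def ReachIn : ℕ → List ℕ → List ℕ → Prop
  | 0 => fun s t => s = t
  | (m+1) => fun s t => ∃ u, FlipStep s u ∧ ReachIn m u t

/-- Flip distance: minimum number of flips transforming `s` into `t`. -/
noncomputable def flipDist (s t : List ℕ) : ℕ := sInf {m | ReachIn m s t}

/-- Two strings are compatible if every symbol occurs equally often in both. -/
def Compatible (s t : List ℕ) : Prop := ∀ a, s.count a = t.count a

/-- A string is fully `k`-ary if the set of symbols occurring in it is exactly `{0,…,k-1}`. -/
def FullyKary (k : ℕ) (s : List ℕ) : Prop := ∀ a, a ∈ s ↔ a < k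

/-- A string is normalized if no two adjacent symbols are equal. -/
def Normalized (s : List ℕ) : Prop := s.Chain' (· ≠ ·)

/-- A string is grouped if the occurrences of each symbol are consecutive. -/
def Grouped (s : List ℕ) : Prop :=
  ∀ i j l : Fin s.length, i < j → j < l → s.get i = s.get l → s.get j = s.get i

/-- Flip grouping distance: minimum number of flips transforming `s` into some grouped string. -/
noncomputable def groupDist (s : List ℕ) : ℕ := sInf {m | ∃ t, Grouped t ∧ ReachIn m s t}

/-- Flip sorting distance: flip distance from `s` to its non-descending rearrangement `I(s)`. -/
noncomputable def sortDist (s : List ℕ) : ℕ := flipDist s (s.insertionSort (· ≤ ·))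

/-- `rep w m` is the concatenation of `m` copies of the string `w`. -/
def rep (w : List ℕ) (m : ℕ) : List ℕ := (List.replicate m w).flatten

/-!
The lower bound is a potential argument. Let `φ(s)` be the number of adjacent equal pairs in
`s ++ [1]`. A flip reverses a prefix, which keeps the equal pairs inside the prefix and inside the
suffix and changes only the pair at the cut, so `φ` grows by at most one per flip (the sentinel `1`
makes flipping the whole string a cut like any other). A normalized string has
`φ(s) = [last symbol is 1]`, while the sorted string `0^A 1^B` has `φ = A + B - 1 = n - 1`.

For the matching upper bound write `s = 0^a (10)^k 1^b` with `a, b ≤ 1`. Two flips turn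
`x^p y^q y x r` into `y^(q+1) x^(p+1) r` and then into `x^(p+1) y^(q+1) r`, absorbing one `10`
block; when `a = 0` one initial flip of `10` into `01` starts the process.
-/

open List

section AdjEqCount

variable {α : Type*} [DecidableEq α]

def adjEqCount : List α → ℕ
  | a :: b :: l => (if a = b then 1 else 0) + adjEqCount (b :: l)
  | _ => 0

lemma adjEqCount_cons (a : α) (l : List α) :
    adjEqCount (a :: l) = adjEqCount l + if l.head? = some a then 1 else 0 := by
  cases l with
  | nil => rfl
  | cons b l => simp [adjEqCount, eq_comm, add_comm]

lemma adjEqCount_concat (l : List α) (a : α) :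
    adjEqCount (l ++ [a]) = adjEqCount l + if l.getLast? = some a then 1 else 0 := by
  induction l with
  | nil => rfl
  | cons b l ih =>
    rw [cons_append, adjEqCount_cons, ih, adjEqCount_cons]
    cases l with
    | nil => simp [adjEqCount, eq_comm]
    | cons c l => simp only [cons_append, head?_cons, getLast?_cons_cons]; ac_rfl

lemma adjEqCount_reverse (l : List α) : adjEqCount l.reverse = adjEqCount l := by
  induction l with
  | nil => rfl
  | cons a l ih => rw [reverse_cons, adjEqCount_concat, ih, getLast?_reverse, adjEqCount_cons]

lemma adjEqCount_append_cons (l₁ l₂ : List α) (a : α) :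
    adjEqCount (l₁ ++ a :: l₂) = adjEqCount (l₁ ++ [a]) + adjEqCount (a :: l₂) := by
  induction l₁ with
  | nil => simp [adjEqCount]
  | cons b l₁ ih =>
    simp only [cons_append, adjEqCount_cons, ih, head?_append, head?_cons, Option.or_some,
      Option.some.injEq]
    omega

lemma adjEqCount_append_le (l₁ l₂ : List α) :
    adjEqCount (l₁ ++ l₂) ≤ adjEqCount l₁ + adjEqCount l₂ + 1 := by
  cases l₂ with
  | nil => simp [adjEqCount]
  | cons a l₂ =>
    rw [adjEqCount_append_cons, adjEqCount_concat]
    split <;> omega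

lemma adjEqCount_add_le_append (l₁ l₂ : List α) :
    adjEqCount l₁ + adjEqCount l₂ ≤ adjEqCount (l₁ ++ l₂) := by
  cases l₂ with
  | nil => simp [adjEqCount]
  | cons a l₂ =>
    rw [adjEqCount_append_cons, adjEqCount_concat]
    omega

lemma adjEqCount_replicate (n : ℕ) (a : α) : adjEqCount (replicate n a) = n - 1 := by
  induction n with
  | zero => rfl
  | succ n ih => cases n <;> simp_all [replicate_succ, adjEqCount_cons]

lemma adjEqCount_eq_zero_of_isChain {l : List α} (h : l.IsChain (· ≠ ·)) :
    adjEqCount l = 0 := by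
  induction l with
  | nil => rfl
  | cons a l ih =>
    rw [isChain_cons] at h
    rw [adjEqCount_cons, ih h.2, if_neg]
    exact fun hl => h.1 a hl rfl

end AdjEqCount

lemma pflip_append_of_le_length {i : ℕ} {s : List ℕ} (h : i ≤ s.length) (u : List ℕ) :
    pflip i (s ++ u) = pflip i s ++ u := by
  simp [pflip, take_append_of_le_length h, drop_append_of_le_length h]

lemma pflip_append_of_length_eq {i : ℕ} {s : List ℕ} (h : s.length = i) (u : List ℕ) :
    pflip i (s ++ u) = s.reverse ++ u := by
  rw [pflip, take_left' h, drop_left' h]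

lemma adjEqCount_pflip_le (i : ℕ) (s : List ℕ) : adjEqCount (pflip i s) ≤ adjEqCount s + 1 :=
  calc adjEqCount (pflip i s)
      ≤ adjEqCount (s.take i).reverse + adjEqCount (s.drop i) + 1 := adjEqCount_append_le _ _
    _ = adjEqCount (s.take i) + adjEqCount (s.drop i) + 1 := by rw [adjEqCount_reverse]
    _ ≤ adjEqCount s + 1 := by
      grw [adjEqCount_add_le_append, take_append_drop]

lemma FlipStep.adjEqCount_append_le {s t : List ℕ} (h : FlipStep s t) (u : List ℕ) :
    adjEqCount (t ++ u) ≤ adjEqCount (s ++ u) + 1 := by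
  obtain ⟨i, -, hi, rfl⟩ := h
  rw [← pflip_append_of_le_length hi]
  exact adjEqCount_pflip_le i _

lemma ReachIn.adjEqCount_append_le {m : ℕ} {s t : List ℕ} (h : ReachIn m s t) (u : List ℕ) :
    adjEqCount (t ++ u) ≤ adjEqCount (s ++ u) + m := by
  induction m generalizing s with
  | zero => rw [show s = t from h]; omega
  | succ m ih =>
    obtain ⟨v, hsv, hvt⟩ := h
    have := hsv.adjEqCount_append_le u
    have := ih hvt
    omega

lemma ReachIn.perm {m : ℕ} {s t : List ℕ} (h : ReachIn m s t) : s ~ t := by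
  induction m generalizing s with
  | zero => rw [show s = t from h]
  | succ m ih =>
    obtain ⟨v, ⟨i, -, -, rfl⟩, hvt⟩ := h
    refine Perm.trans ?_ (ih hvt)
    calc s = s.take i ++ s.drop i := (take_append_drop i s).symm
      _ ~ pflip i s := (reverse_perm _).symm.append_right _

lemma ReachIn.trans {m k : ℕ} {s t u : List ℕ} (hst : ReachIn m s t) (htu : ReachIn k t u) :
    ReachIn (m + k) s u := by
  induction m generalizing s with
  | zero => rwa [show s = t from hst, zero_add]
  | succ m ih =>
    obtain ⟨v, hsv, hvt⟩ := hst
    rw [add_right_comm]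
    exact ⟨v, hsv, ih hvt⟩

lemma FlipStep.reachIn_one {s t : List ℕ} (h : FlipStep s t) : ReachIn 1 s t := ⟨t, h, rfl⟩

lemma flipDist_eq_of_reachIn {m : ℕ} {s t : List ℕ} (h : ReachIn m s t)
    (hmin : ∀ k, ReachIn k s t → m ≤ k) : flipDist s t = m :=
  IsLeast.csInf_eq ⟨h, hmin⟩

lemma insertionSort_eq_of_reachIn {m : ℕ} {s t : List ℕ} (h : ReachIn m s t) (ht : t.SortedLE) :
    s.insertionSort (· ≤ ·) = t :=
  ((perm_insertionSort _ s).trans h.perm).eq_of_sortedLE sortedLE_insertionSort ht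

lemma rep_succ (w : List ℕ) (k : ℕ) : rep w (k + 1) = w ++ rep w k := by
  simp [rep, replicate_succ]

lemma length_rep (w : List ℕ) (k : ℕ) : (rep w k).length = k * w.length := by
  simp [rep]

lemma flipStep_replicate_append (x y p q : ℕ) (rest : List ℕ) :
    FlipStep (replicate p x ++ replicate (q + 1) y ++ rest)
      (replicate (q + 1) y ++ replicate p x ++ rest) := by
  refine ⟨p + q + 1, by omega, by simp only [length_append, length_replicate]; omega, ?_⟩
  rw [pflip_append_of_length_eq (by simp only [length_append, length_replicate]; omega)]
  simp

lemma reachIn_two_replicate_append_cons_cons (x y p q : ℕ) (rest : List ℕ) :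
    ReachIn 2 (replicate p x ++ replicate q y ++ y :: x :: rest)
      (replicate (p + 1) x ++ replicate (q + 1) y ++ rest) := by
  have h₁ := flipStep_replicate_append x y p q (x :: rest)
  have h₂ := flipStep_replicate_append y x (q + 1) p rest
  rw [show replicate (q + 1) y ++ replicate p x ++ x :: rest
      = replicate (q + 1) y ++ replicate (p + 1) x ++ rest by simp [replicate_succ']] at h₁
  rw [show replicate p x ++ replicate q y ++ y :: x :: rest
      = replicate p x ++ replicate (q + 1) y ++ x :: rest by simp [replicate_succ']]
  exact h₁.reachIn_one.trans h₂.reachIn_one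

lemma reachIn_replicate_append_rep (x y p q k : ℕ) (rest : List ℕ) :
    ReachIn (2 * k) (replicate p x ++ replicate q y ++ rep [y, x] k ++ rest)
      (replicate (p + k) x ++ replicate (q + k) y ++ rest) := by
  induction k generalizing p q with
  | zero => simp only [mul_zero, rep, replicate_zero, flatten_nil, append_nil, add_zero]; rfl
  | succ k ih =>
    have h := ih (p + 1) (q + 1)
    rw [append_assoc _ (rep _ _)] at h
    replace h := (reachIn_two_replicate_append_cons_cons x y p q _).trans h
    rw [show p + 1 + k = p + (k + 1) by omega, show q + 1 + k = q + (k + 1) by omega] at h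
    simpa [rep_succ, mul_add, add_comm] using h

lemma exists_eq_replicate_append_rep_of_normalized {s : List ℕ} (hs : Normalized s)
    (hbin : ∀ x ∈ s, x < 2) :
    ∃ a k b, a ≤ 1 ∧ b ≤ 1 ∧ s = replicate a 0 ++ rep [1, 0] k ++ replicate b 1 := by
  induction s with
  | nil => exact ⟨0, 0, 0, zero_le_one, zero_le_one, rfl⟩
  | cons x t ih =>
    rw [Normalized, Chain', isChain_cons] at hs
    obtain ⟨a, k, b, ha, hb, rfl⟩ := ih hs.2 fun y hy => hbin y (mem_cons_of_mem x hy)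
    have hx : x < 2 := hbin x mem_cons_self
    have hhead := hs.1
    interval_cases x <;> interval_cases a
    · exact ⟨1, k, b, le_rfl, hb, rfl⟩
    · simp at hhead
    · obtain ⟨rfl, rfl⟩ : k = 0 ∧ b = 0 := by
        rcases k with _ | k <;> rcases b with _ | b <;> simp_all [rep]
      exact ⟨0, 0, 1, zero_le_one, le_rfl, rfl⟩
    · exact ⟨0, k + 1, b, zero_le_one, hb, by simp [rep_succ]⟩

lemma getLast?_replicate_append_rep_ne (a k : ℕ) :
    (replicate a 0 ++ rep [1, 0] k).getLast? ≠ some 1 := by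
  rcases k with _ | k
  · simp [rep, getLast?_replicate]
  · simp [rep, replicate_succ', getLast?_append]

lemma reachIn_sort_replicate_append_rep {a k : ℕ} (ha : a ≤ 1) (hak : 1 ≤ a + k) (b : ℕ) :
    ReachIn (a + 2 * k - 1) (replicate a 0 ++ rep [1, 0] k ++ replicate b 1)
      (replicate (a + k) 0 ++ replicate (k + b) 1) := by
  interval_cases a
  · obtain ⟨k, rfl⟩ : ∃ k', k = k' + 1 := ⟨k - 1, by omega⟩
    have h₁ := flipStep_replicate_append 1 0 1 0 (rep [1, 0] k ++ replicate b 1)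
    have h₂ := reachIn_replicate_append_rep 0 1 1 1 k (replicate b 1)
    convert h₁.reachIn_one.trans h₂ using 1
    · omega
    · simp [rep_succ]
    · simp [replicate_append_replicate, add_comm, add_left_comm]
  · convert reachIn_replicate_append_rep 0 1 1 0 k (replicate b 1) using 1
    · omega
    · simp
    · simp [replicate_append_replicate]

lemma ReachIn.add_le_of_normalized {m A B x y : ℕ} {s : List ℕ} (hs : Normalized s)
    (h : ReachIn m s (replicate A x ++ replicate B y)) :
    A + B ≤ m + (if s.getLast? = some y then 1 else 0) + 1 := by
  have hpot := h.adjEqCount_append_le [y]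
  rw [adjEqCount_concat s, adjEqCount_eq_zero_of_isChain hs, append_assoc, ← replicate_succ']
    at hpot
  have := adjEqCount_add_le_append (replicate A x) (replicate (B + 1) y)
  rw [adjEqCount_replicate, adjEqCount_replicate] at this
  omega

lemma sortedLE_replicate_append_replicate {x y : ℕ} (hxy : x ≤ y) (A B : ℕ) :
    (replicate A x ++ replicate B y).SortedLE := by
  refine (pairwise_append.2 ⟨?_, ?_, ?_⟩).sortedLE
  · exact pairwise_replicate.2 (Or.inr le_rfl)
  · exact pairwise_replicate.2 (Or.inr le_rfl)
  · intro a ha b hb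
    rwa [eq_of_mem_replicate ha, eq_of_mem_replicate hb]

lemma sortDist_add_of_normalized_binary {s : List ℕ} (hs : Normalized s)
    (hbin : ∀ x ∈ s, x < 2) (h0 : 0 ∈ s) :
    sortDist s + (if s.getLast? = some 1 then 1 else 0) + 1 = s.length := by
  obtain ⟨a, k, b, ha, hb, hs_eq⟩ := exists_eq_replicate_append_rep_of_normalized hs hbin
  have hak : 1 ≤ a + k := by
    by_contra! h
    obtain ⟨rfl, rfl⟩ : a = 0 ∧ k = 0 := by omega
    simp [hs_eq, rep] at h0
  have hlast : (if s.getLast? = some 1 then 1 else 0) = b := by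
    interval_cases b
    · simpa [hs_eq] using getLast?_replicate_append_rep_ne a k
    · simp [hs_eq]
  have hlen : s.length = a + 2 * k + b := by
    simp only [hs_eq, length_append, length_replicate, length_rep, length_cons, length_nil]
    omega
  set t := replicate (a + k) 0 ++ replicate (k + b) 1
  have hreach : ReachIn (a + 2 * k - 1) s t := hs_eq ▸ reachIn_sort_replicate_append_rep ha hak b
  have hmin (m : ℕ) (hm : ReachIn m s t) : a + 2 * k - 1 ≤ m := by
    have := hm.add_le_of_normalized hs
    omega
  rw [sortDist,
    insertionSort_eq_of_reachIn hreach (sortedLE_replicate_append_replicate zero_le_one _ _),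
    flipDist_eq_of_reachIn hreach hmin, hlast, hlen]
  omega

theorem sorting_binary (n : ℕ) (s : List ℕ)
    (hlen : s.length = n) (hfull : FullyKary 2 s) (hnorm : Normalized s) :
    (s.getLast? = some 1 → sortDist s = n - 2) ∧
    (s.getLast? = some 0 → sortDist s = n - 1) := by
  have key := sortDist_add_of_normalized_binary hnorm (fun x hx => (hfull x).1 hx)
    ((hfull 0).2 two_pos)
  refine ⟨fun hlast => ?_, fun hlast => ?_⟩
  · rw [hlast, if_pos rfl] at key
    omega
  · rw [hlast, if_neg (by simp)] at key
    omega
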